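/- Assume E[Σ_{i=1}^N q̄_i] < ∞. Then E[⟨q̄, ū⟩] ≤ smax·N^(1−α). -/

import Mathlib

open MeasureTheory ProbabilityTheory Filter

/-- Steady-state JSQ load-balancing model at size `N` with parameters
`α, amax, smax, σa2, σs2`, on a probability space `(Ω, μ)`. -/
structure JSQModel (N : ℕ) (α amax smax σa2 σs2 : ℝ)
    (Ω : Type) [MeasurableSpace Ω] (μ : Measure Ω) where
  hα : 0 < α
  hamax : 0 < amax
  hsmax : 0 < smax
  hσa2 : 0 ≤ σa2
  hσs2 : 0 ≤ σs2
  hprob : IsProbabilityMeasure μ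
  /-- stationary queue lengths -/
  q : Ω → Fin N → ℕ
  /-- number of arrivals -/
  a : Ω → ℕ
  /-- potential services -/
  s : Ω → Fin N → ℕ
  /-- index of a shortest queue (JSQ routing) -/
  I : Ω → Fin N
  meas_q : Measurable q
  meas_a : Measurable a
  meas_s : Measurable s
  meas_I : Measurable I
  a_bdd : ∀ᵐ ω ∂μ, (a ω : ℝ) ≤ amax
  a_mean : ∫ ω, (a ω : ℝ) ∂μ = N * (1 - (N : ℝ) ^ (-α))
  a_var : variance (fun ω => (a ω : ℝ)) μ = N * σa2
  s_bdd : ∀ i, ∀ᵐ ω ∂μ, (s ω i : ℝ) ≤ smax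
  s_mean : ∀ i, ∫ ω, (s ω i : ℝ) ∂μ = 1
  s_var : ∀ i, variance (fun ω => (s ω i : ℝ)) μ = σs2
  s_indep : iIndepFun (fun i ω => s ω i) μ
  s_ident : ∀ i j, IdentDistrib (fun ω => s ω i) (fun ω => s ω j) μ μ
  I_min : ∀ᵐ ω ∂μ, q ω (I ω) = ⨅ j, q ω j
  indep_as_qI : IndepFun (fun ω => (a ω, s ω)) (fun ω => (q ω, I ω)) μ
  indep_a_s : IndepFun a s μ
  /-- the next-step queue-length vector has the same distribution as `q` -/
  stationary :
    IdentDistrib (fun ω i => q ω i + (if i = I ω then a ω else 0) - s ω i) q μ μ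

namespace JSQModel

variable {N : ℕ} {α amax smax σa2 σs2 : ℝ} {Ω : Type} [MeasurableSpace Ω]
  {μ : Measure Ω}

/-- routed arrivals -/
def atilde (M : JSQModel N α amax smax σa2 σs2 Ω μ) (ω : Ω) (i : Fin N) : ℕ :=
  if i = M.I ω then M.a ω else 0

/-- unused services -/
def u (M : JSQModel N α amax smax σa2 σs2 Ω μ) (ω : Ω) (i : Fin N) : ℕ :=
  M.s ω i - (M.q ω i + M.atilde ω i)

/-- next-step queue lengths -/
def qplus (M : JSQModel N α amax smax σa2 σs2 Ω μ) (ω : Ω) (i : Fin N) : ℕ :=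
  M.q ω i + M.atilde ω i - M.s ω i

end JSQModel

/-- The exponential law on `[0, ∞)` with the given rate, i.e. the measure on `ℝ`
with density `rate · exp(−rate·x)` on `[0, ∞)` with respect to Lebesgue measure. -/
noncomputable def expLaw (rate : ℝ) : Measure ℝ :=
  MeasureTheory.volume.withDensity fun x =>
    ENNReal.ofReal (if 0 ≤ x then rate * Real.exp (-(rate * x)) else 0)

/-!
On the event `ū_i > 0` the server empties queue `i`, so `q̄_i < s̄_i ≤ smax` and hence
`⟨q̄, ū⟩ ≤ smax · Σ ū_i`. Summing `q̄⁺_i + s̄_i = q̄_i + ã_i + ū_i` over `i` and taking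
expectations, stationarity cancels the queue terms and leaves
`E[Σ ū_i] = E[Σ s̄_i] − E[ā] = N − N(1 − N^(−α)) = N^(1−α)`.
-/

lemma integrable_natCast_of_ae_le {Ω : Type*} [MeasurableSpace Ω] {μ : Measure Ω}
    [IsFiniteMeasure μ] {f : Ω → ℕ} (hf : Measurable f) {C : ℝ}
    (hC : ∀ᵐ ω ∂μ, (f ω : ℝ) ≤ C) : Integrable (fun ω => (f ω : ℝ)) μ :=
  .of_bound (measurable_from_top.comp hf).aestronglyMeasurable C <| by
    filter_upwards [hC] with ω hω
    rwa [Real.norm_natCast]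

namespace JSQModel

variable {N : ℕ} {α amax smax σa2 σs2 : ℝ} {Ω : Type} [MeasurableSpace Ω] {μ : Measure Ω}
  (M : JSQModel N α amax smax σa2 σs2 Ω μ)

/-- All primitives take values in countable discrete spaces. -/
lemma measurable_of_primitives {β : Type*} [MeasurableSpace β]
    (f : (Fin N → ℕ) → ℕ → (Fin N → ℕ) → Fin N → β) :
    Measurable fun ω => f (M.q ω) (M.a ω) (M.s ω) (M.I ω) :=
  (measurable_of_countable fun x : (Fin N → ℕ) × ℕ × (Fin N → ℕ) × Fin N =>
    f x.1 x.2.1 x.2.2.1 x.2.2.2).comp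
    (M.meas_q.prodMk (M.meas_a.prodMk (M.meas_s.prodMk M.meas_I)))

lemma integrable_a : Integrable (fun ω => (M.a ω : ℝ)) μ :=
  have := M.hprob
  integrable_natCast_of_ae_le M.meas_a M.a_bdd

lemma integrable_s (i : Fin N) : Integrable (fun ω => (M.s ω i : ℝ)) μ :=
  have := M.hprob
  integrable_natCast_of_ae_le (M.measurable_of_primitives fun _ _ s _ => s i) (M.s_bdd i)

lemma u_le_s (ω : Ω) (i : Fin N) : M.u ω i ≤ M.s ω i := Nat.sub_le _ _

lemma integrable_u (i : Fin N) : Integrable (fun ω => (M.u ω i : ℝ)) μ := by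
  have := M.hprob
  refine integrable_natCast_of_ae_le (C := smax)
    (M.measurable_of_primitives fun q a s I => s i - (q i + if i = I then a else 0)) ?_
  filter_upwards [M.s_bdd i] with ω hω
  exact le_trans (by exact_mod_cast M.u_le_s ω i) hω

lemma q_mul_u_le_s_mul_u (ω : Ω) (i : Fin N) : M.q ω i * M.u ω i ≤ M.s ω i * M.u ω i := by
  rcases Nat.eq_zero_or_pos (M.u ω i) with h | h
  · simp [h]
  · exact Nat.mul_le_mul_right _ (by unfold u at h; omega)

lemma qplus_add_s (ω : Ω) (i : Fin N) :
    M.qplus ω i + M.s ω i = M.q ω i + M.atilde ω i + M.u ω i := by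
  unfold qplus u
  omega

lemma sum_atilde (ω : Ω) : ∑ i, M.atilde ω i = M.a ω := by
  simp [atilde]

lemma sum_u_eq (ω : Ω) : ∑ i, (M.u ω i : ℝ) =
    ∑ i, (M.qplus ω i : ℝ) + ∑ i, (M.s ω i : ℝ) - ∑ i, (M.q ω i : ℝ) - M.a ω := by
  have h : ∑ i, ((M.qplus ω i : ℝ) + M.s ω i) = ∑ i, ((M.q ω i : ℝ) + M.atilde ω i + M.u ω i) :=
    Finset.sum_congr rfl fun i _ => by exact_mod_cast M.qplus_add_s ω i
  have ha : ∑ i, (M.atilde ω i : ℝ) = M.a ω := by exact_mod_cast M.sum_atilde ω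
  simp only [Finset.sum_add_distrib] at h
  linarith

lemma identDistrib_sum_qplus :
    IdentDistrib (fun ω => ∑ i, (M.qplus ω i : ℝ)) (fun ω => ∑ i, (M.q ω i : ℝ)) μ μ :=
  M.stationary.comp (u := fun v : Fin N → ℕ => ∑ i, (v i : ℝ)) (measurable_of_countable _)

lemma integral_sum_s : ∫ ω, ∑ i, (M.s ω i : ℝ) ∂μ = N := by
  simp [integral_finsetSum _ fun i _ => M.integrable_s i, M.s_mean]

lemma integral_sum_u (hq : Integrable (fun ω => ∑ i, (M.q ω i : ℝ)) μ) :
    ∫ ω, ∑ i, (M.u ω i : ℝ) ∂μ = N * (N : ℝ) ^ (-α) := by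
  have hqplus := M.identDistrib_sum_qplus
  have hqplus_int := hqplus.integrable_iff.mpr hq
  have hs : Integrable (fun ω => ∑ i, (M.s ω i : ℝ)) μ :=
    integrable_finsetSum _ fun i _ => M.integrable_s i
  simp_rw [M.sum_u_eq]
  rw [integral_sub (by fun_prop) M.integrable_a, integral_sub (by fun_prop) hq,
    integral_add hqplus_int hs, hqplus.integral_eq, M.integral_sum_s, M.a_mean]
  ring

lemma integral_inner_q_u_le :
    ∫ ω, ∑ i, (M.q ω i : ℝ) * (M.u ω i : ℝ) ∂μ ≤ smax * ∫ ω, ∑ i, (M.u ω i : ℝ) ∂μ := by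
  rw [← integral_const_mul]
  refine integral_mono_of_nonneg (.of_forall fun ω => by positivity)
    ((integrable_finsetSum _ fun i _ => M.integrable_u i).const_mul smax) ?_
  filter_upwards [ae_all_iff.2 M.s_bdd] with ω hω
  rw [Finset.mul_sum]
  refine Finset.sum_le_sum fun i _ => ?_
  calc (M.q ω i : ℝ) * M.u ω i ≤ M.s ω i * M.u ω i := by exact_mod_cast M.q_mul_u_le_s_mul_u ω i
    _ ≤ smax * M.u ω i := by gcongr; exact hω i

end JSQModel

/-- Assume `E[Σᵢ q̄ᵢ] < ∞`. Then `E[⟨q̄, ū⟩] ≤ smax·N^(1−α)`. -/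
theorem inner_q_u_bound
    (N : ℕ) (hN : 2 ≤ N) (α amax smax σa2 σs2 : ℝ)
    {Ω : Type} [MeasurableSpace Ω] {μ : Measure Ω}
    (M : JSQModel N α amax smax σa2 σs2 Ω μ)
    (hint : Integrable (fun ω => ∑ i, (M.q ω i : ℝ)) μ) :
    ∫ ω, ∑ i, (M.q ω i : ℝ) * (M.u ω i : ℝ) ∂μ ≤ smax * (N : ℝ) ^ ((1 : ℝ) - α) := by
  have hN₀ : (0 : ℝ) < N := by exact_mod_cast (by omega : 0 < N)
  calc ∫ ω, ∑ i, (M.q ω i : ℝ) * (M.u ω i : ℝ) ∂μ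
      ≤ smax * ∫ ω, ∑ i, (M.u ω i : ℝ) ∂μ := M.integral_inner_q_u_le
    _ = smax * (N : ℝ) ^ ((1 : ℝ) - α) := by
      rw [M.integral_sum_u hint, sub_eq_add_neg, Real.rpow_add hN₀, Real.rpow_one]
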